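/- Fix natural numbers m, r₁, r₂ with r₁ ≤ m and r₂ ≤ m. Let C₁ be the subspace of functions (ZMod 2)^m × (ZMod 2)^m → ZMod 2 that are evaluations of polynomials in 2m variables whose degree in the first m variables (total degree after setting the last m variables to constants, uniformly over those constants; equivalently, every monomial has degree at most r₁ in the first m variables) is at most r₁, and let C₂ be the analogous subspace with degree at most r₂ in the last m variables. Then C₁ ∩ C₂ is exactly the set of evaluations of polynomials every monomial of which has degree at most r₁ in the first m variables and at most r₂ in the last m variables, and dim(C₁ ∩ C₂) · 2^{2m} = dim C₁ · dim C₂; explicitly dim C₁ = (∑_{i=0}^{r₁} (m choose i)) · 2^m, dim C₂ = 2^m · (∑_{i=0}^{r₂} (m choose i)), and dim(C₁ ∩ C₂) = (∑_{i=0}^{r₁} (m choose i)) · (∑_{i=0}^{r₂} (m choose i)). -/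

import Mathlib

/-!
Over `𝔽₂` the squarefree monomials `x^S = ∏_{i ∈ S} x i` form a basis of the space of all
functions `𝔽₂^σ → 𝔽₂`: evaluation is injective on multilinear polynomials, and there are
`2 ^ #σ` of them. Since `a ^ k = a` for `k ≠ 0`, a monomial `x^d` evaluates to `x^(supp d)`, so
for a lower set `s` of exponents the evaluations of polynomials supported on `s` are spanned by
the basis vectors `x^S` with `1_S ∈ s`. Spans of subfamilies of one basis intersect in the span
of the common subfamily, with its size as dimension; the degree bounds on the two blocks of
variables reduce the dimension count to counting pairs of subsets of `Fin m`.
-/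

open MvPolynomial

/-- Degree of a monomial (exponent vector) `d` in the first block of `m` variables. -/
def degFst {m : ℕ} (d : (Fin m ⊕ Fin m) →₀ ℕ) : ℕ := ∑ i : Fin m, d (Sum.inl i)

/-- Degree of a monomial (exponent vector) `d` in the last block of `m` variables. -/
def degSnd {m : ℕ} (d : (Fin m ⊕ Fin m) →₀ ℕ) : ℕ := ∑ i : Fin m, d (Sum.inr i)

/-- The code `RM(r₁, m) ⊗ RM(m, m)`: evaluations on `(ZMod 2)^m × (ZMod 2)^m` of polynomials
in `2m` variables each of whose monomials has degree at most `r₁` in the first `m`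
variables. -/
def Cfst (r₁ m : ℕ) :
    Submodule (ZMod 2) ((Fin m → ZMod 2) × (Fin m → ZMod 2) → ZMod 2) where
  carrier := {f | ∃ p : MvPolynomial (Fin m ⊕ Fin m) (ZMod 2),
    (∀ d ∈ p.support, degFst d ≤ r₁) ∧ ∀ z, f z = eval (Sum.elim z.1 z.2) p}
  zero_mem' := ⟨0, by simp, by simp⟩
  add_mem' := by
    rintro f g ⟨p, hp, hf⟩ ⟨q, hq, hg⟩
    refine ⟨p + q, fun d hd => ?_, fun z => by simp [hf z, hg z]⟩
    rcases Finset.mem_union.mp (MvPolynomial.support_add hd) with h | h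
    exacts [hp d h, hq d h]
  smul_mem' := by
    rintro c f ⟨p, hp, hf⟩
    refine ⟨c • p, fun d hd => hp d (Finsupp.support_smul hd), fun z => by simp [hf z]⟩

/-- The code `RM(m, m) ⊗ RM(r₂, m)`: evaluations on `(ZMod 2)^m × (ZMod 2)^m` of polynomials
in `2m` variables each of whose monomials has degree at most `r₂` in the last `m`
variables. -/
def Csnd (r₂ m : ℕ) :
    Submodule (ZMod 2) ((Fin m → ZMod 2) × (Fin m → ZMod 2) → ZMod 2) where
  carrier := {f | ∃ p : MvPolynomial (Fin m ⊕ Fin m) (ZMod 2),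
    (∀ d ∈ p.support, degSnd d ≤ r₂) ∧ ∀ z, f z = eval (Sum.elim z.1 z.2) p}
  zero_mem' := ⟨0, by simp, by simp⟩
  add_mem' := by
    rintro f g ⟨p, hp, hf⟩ ⟨q, hq, hg⟩
    refine ⟨p + q, fun d hd => ?_, fun z => by simp [hf z, hg z]⟩
    rcases Finset.mem_union.mp (MvPolynomial.support_add hd) with h | h
    exacts [hp d h, hq d h]
  smul_mem' := by
    rintro c f ⟨p, hp, hf⟩
    refine ⟨c • p, fun d hd => hp d (Finsupp.support_smul hd), fun z => by simp [hf z]⟩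

open Finset

theorem Module.Basis.span_image_inter {ι R M : Type*} [Semiring R] [AddCommMonoid M]
    [Module R M] (b : Module.Basis ι R M) (s t : Set ι) :
    Submodule.span R (b '' (s ∩ t)) = Submodule.span R (b '' s) ⊓ Submodule.span R (b '' t) := by
  ext x
  simp only [Submodule.mem_inf, b.mem_span_image, Set.subset_inter_iff]

theorem Fintype.card_subtype_finset_card_le (α : Type*) [Fintype α] (r : ℕ) :
    Fintype.card {A : Finset α // #A ≤ r} = ∑ i ∈ range (r + 1), (Fintype.card α).choose i := by
  classical
  have h : ({A | #A ≤ r} : Finset (Finset α)) = (range (r + 1)).biUnion (powersetCard · univ) := by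
    ext A
    simp
  rw [Fintype.card_subtype, h, card_biUnion ((pairwise_disjoint_powersetCard _).set_pairwise _)]
  simp only [card_powersetCard, card_univ]

theorem Finset.natCard_subtype_toLeft_toRight {α β : Type*} (P : Finset α → Prop)
    (Q : Finset β → Prop) :
    Nat.card {S : Finset (α ⊕ β) // P S.toLeft ∧ Q S.toRight}
      = Nat.card {A // P A} * Nat.card {B // Q B} := by
  rw [← Nat.card_prod]
  exact Nat.card_congr
    ((sumEquiv.toEquiv.subtypeEquiv fun _ => Iff.rfl).trans Equiv.subtypeProdEquivProd)

namespace BooleanPoly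

section

variable {σ : Type}

def squarefreeMonomial (S : Finset σ) (x : σ → ZMod 2) : ZMod 2 := ∏ i ∈ S, x i

noncomputable def polyFun (s : Set (σ →₀ ℕ)) : Submodule (ZMod 2) ((σ → ZMod 2) → ZMod 2) :=
  (restrictSupport (ZMod 2) s).map (evalₗ (ZMod 2) σ)

theorem pow_eq_self_of_ne_zero (a : ZMod 2) {k : ℕ} (hk : k ≠ 0) : a ^ k = a := by
  obtain ⟨n, rfl⟩ := Nat.exists_eq_succ_of_ne_zero hk
  exact IsIdempotentElem.pow_succ_eq n (by rw [IsIdempotentElem, ← sq, ZMod.pow_card])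

theorem evalₗ_monomial_one (d : σ →₀ ℕ) :
    evalₗ (ZMod 2) σ (monomial d 1) = squarefreeMonomial d.support := by
  funext x
  rw [evalₗ_apply, eval_monomial, one_mul, Finsupp.prod, squarefreeMonomial]
  exact prod_congr rfl fun i hi => pow_eq_self_of_ne_zero _ (Finsupp.mem_support_iff.mp hi)

variable [DecidableEq σ]

noncomputable def squarefreeExponent (S : Finset σ) : σ →₀ ℕ := Multiset.toFinsupp S.val

theorem squarefreeExponent_apply (S : Finset σ) (i : σ) :
    squarefreeExponent S i = if i ∈ S then 1 else 0 := by
  simp [squarefreeExponent, Multiset.toFinsupp_apply, Multiset.count_eq_of_nodup S.nodup]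

@[simp]
theorem support_squarefreeExponent (S : Finset σ) : (squarefreeExponent S).support = S := by
  simp [squarefreeExponent, Multiset.toFinsupp_support]

theorem squarefreeExponent_support_le (d : σ →₀ ℕ) : squarefreeExponent d.support ≤ d := by
  intro i
  rw [squarefreeExponent_apply]
  split_ifs with h <;> simp_all [Nat.one_le_iff_ne_zero]

theorem evalₗ_monomial_squarefreeExponent (S : Finset σ) :
    evalₗ (ZMod 2) σ (monomial (squarefreeExponent S) 1) = squarefreeMonomial S := by
  rw [evalₗ_monomial_one, support_squarefreeExponent]

variable [Fintype σ]

theorem linearIndependent_squarefreeMonomial :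
    LinearIndependent (ZMod 2) (squarefreeMonomial (σ := σ)) := by
  let v : Finset σ → R σ (ZMod 2) := fun S => ⟨monomial (squarefreeExponent S) 1, by
    rw [mem_restrictDegree]
    intro d hd i
    rw [support_monomial, if_neg one_ne_zero, mem_singleton] at hd
    rw [hd, squarefreeExponent_apply]
    split_ifs <;> simp [ZMod.card]⟩
  have hv : LinearIndependent (ZMod 2) v :=
    LinearIndependent.of_comp (restrictDegree σ (ZMod 2) 1).subtype
      ((basisMonomials σ (ZMod 2)).linearIndependent.comp _ fun S T h => by
        simpa using congrArg Finsupp.support h)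
  have hev : evalᵢ σ (ZMod 2) ∘ v = squarefreeMonomial :=
    funext fun S => evalₗ_monomial_squarefreeExponent S
  exact hev ▸ hv.map' (evalᵢ σ (ZMod 2)) (ker_evalₗ σ (ZMod 2))

noncomputable def squarefreeMonomialBasis :
    Module.Basis (Finset σ) (ZMod 2) ((σ → ZMod 2) → ZMod 2) :=
  basisOfLinearIndependentOfCardEqFinrank linearIndependent_squarefreeMonomial <| by
    simp [Module.finrank_fintype_fun_eq_card, Fintype.card_finset, ZMod.card]

@[simp]
theorem coe_squarefreeMonomialBasis :
    ⇑(squarefreeMonomialBasis (σ := σ)) = squarefreeMonomial :=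
  coe_basisOfLinearIndependentOfCardEqFinrank _ _

variable {s t : Set (σ →₀ ℕ)}

theorem polyFun_eq_span (hs : IsLowerSet s) :
    polyFun s = Submodule.span (ZMod 2)
      (squarefreeMonomialBasis '' {S | squarefreeExponent S ∈ s}) := by
  refine le_antisymm ?_ (Submodule.span_le.mpr ?_)
  · rintro _ ⟨p, hp, rfl⟩
    rw [p.as_sum, map_sum]
    refine Submodule.sum_mem _ fun d hd => ?_
    have hterm : evalₗ (ZMod 2) σ (monomial d (coeff d p))
        = coeff d p • squarefreeMonomial d.support := by
      rw [← mul_one (coeff d p), ← smul_eq_mul, ← smul_monomial, map_smul, evalₗ_monomial_one,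
        smul_eq_mul, mul_one]
    rw [hterm]
    refine Submodule.smul_mem _ _ (Submodule.subset_span ⟨d.support, ?_, by simp⟩)
    exact hs (squarefreeExponent_support_le d) (hp hd)
  · rintro _ ⟨S, hS, rfl⟩
    refine ⟨monomial (squarefreeExponent S) 1, ?_, ?_⟩
    · rw [SetLike.mem_coe, mem_restrictSupport_iff, support_monomial, if_neg one_ne_zero]
      simpa using hS
    · simp [evalₗ_monomial_squarefreeExponent]

theorem polyFun_inf (hs : IsLowerSet s) (ht : IsLowerSet t) :
    polyFun s ⊓ polyFun t = polyFun (s ∩ t) := by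
  rw [polyFun_eq_span hs, polyFun_eq_span ht, polyFun_eq_span (hs.inter ht),
    ← Module.Basis.span_image_inter]
  rfl

theorem finrank_polyFun (hs : IsLowerSet s) :
    Module.finrank (ZMod 2) (polyFun s) = Nat.card {S : Finset σ // squarefreeExponent S ∈ s} := by
  classical
  rw [polyFun_eq_span hs, Set.image_eq_range, Nat.card_eq_fintype_card]
  exact finrank_span_eq_card
    (squarefreeMonomialBasis.linearIndependent.comp _ Subtype.val_injective)

end

section Product

variable {α β : Type}

noncomputable def polyFunProd (s : Set ((α ⊕ β) →₀ ℕ)) :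
    Submodule (ZMod 2) ((α → ZMod 2) × (β → ZMod 2) → ZMod 2) :=
  (polyFun s).map
    (LinearEquiv.funCongrLeft (ZMod 2) (ZMod 2) (Equiv.sumArrowEquivProdArrow α β (ZMod 2)).symm :
      ((α ⊕ β → ZMod 2) → ZMod 2) →ₗ[ZMod 2] _)

theorem mem_polyFunProd {s : Set ((α ⊕ β) →₀ ℕ)} {f : (α → ZMod 2) × (β → ZMod 2) → ZMod 2} :
    f ∈ polyFunProd s ↔ ∃ p : MvPolynomial (α ⊕ β) (ZMod 2),
      (∀ d ∈ p.support, d ∈ s) ∧ ∀ z, f z = eval (Sum.elim z.1 z.2) p := by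
  simp only [polyFunProd, polyFun, Submodule.mem_map, mem_restrictSupport_iff]
  constructor
  · rintro ⟨_, ⟨p, hp, rfl⟩, rfl⟩
    exact ⟨p, hp, fun z => rfl⟩
  · rintro ⟨p, hp, hf⟩
    refine ⟨evalₗ (ZMod 2) _ p, ⟨p, hp, rfl⟩, ?_⟩
    ext z
    exact (hf z).symm

variable [Fintype α] [Fintype β] [DecidableEq α] [DecidableEq β] {s t : Set ((α ⊕ β) →₀ ℕ)}

theorem polyFunProd_inf (hs : IsLowerSet s) (ht : IsLowerSet t) :
    polyFunProd s ⊓ polyFunProd t = polyFunProd (s ∩ t) := by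
  rw [polyFunProd, polyFunProd, ← Submodule.map_inf _ (LinearEquiv.injective _),
    polyFun_inf hs ht]
  rfl

theorem finrank_polyFunProd (hs : IsLowerSet s) :
    Module.finrank (ZMod 2) (polyFunProd s)
      = Nat.card {S : Finset (α ⊕ β) // squarefreeExponent S ∈ s} :=
  (LinearEquiv.finrank_map_eq _ _).trans (finrank_polyFun hs)

end Product

end BooleanPoly

open BooleanPoly

theorem isLowerSet_degFst_le (m r : ℕ) :
    IsLowerSet {d : (Fin m ⊕ Fin m) →₀ ℕ | degFst d ≤ r} :=
  fun _ _ hle hd => le_trans (sum_le_sum fun i _ => hle (Sum.inl i)) hd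

theorem isLowerSet_degSnd_le (m r : ℕ) :
    IsLowerSet {d : (Fin m ⊕ Fin m) →₀ ℕ | degSnd d ≤ r} :=
  fun _ _ hle hd => le_trans (sum_le_sum fun i _ => hle (Sum.inr i)) hd

theorem degFst_squarefreeExponent {m : ℕ} (S : Finset (Fin m ⊕ Fin m)) :
    degFst (squarefreeExponent S) = #S.toLeft := by
  rw [degFst, Fintype.sum_congr _ _ fun i => squarefreeExponent_apply S _, sum_boole, Nat.cast_id]
  congr 1
  ext
  simp

theorem degSnd_squarefreeExponent {m : ℕ} (S : Finset (Fin m ⊕ Fin m)) :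
    degSnd (squarefreeExponent S) = #S.toRight := by
  rw [degSnd, Fintype.sum_congr _ _ fun i => squarefreeExponent_apply S _, sum_boole, Nat.cast_id]
  congr 1
  ext
  simp

theorem stmt_17 (m r₁ r₂ : ℕ) :
    (∀ f, f ∈ Cfst r₁ m ⊓ Csnd r₂ m ↔
      ∃ p : MvPolynomial (Fin m ⊕ Fin m) (ZMod 2),
        (∀ d ∈ p.support, degFst d ≤ r₁ ∧ degSnd d ≤ r₂) ∧
        ∀ z, f z = eval (Sum.elim z.1 z.2) p) ∧
    Module.finrank (ZMod 2) ↥(Cfst r₁ m ⊓ Csnd r₂ m) * 2 ^ (2 * m)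
      = Module.finrank (ZMod 2) ↥(Cfst r₁ m) * Module.finrank (ZMod 2) ↥(Csnd r₂ m) ∧
    Module.finrank (ZMod 2) ↥(Cfst r₁ m)
      = (∑ i ∈ Finset.range (r₁ + 1), Nat.choose m i) * 2 ^ m ∧
    Module.finrank (ZMod 2) ↥(Csnd r₂ m)
      = 2 ^ m * ∑ i ∈ Finset.range (r₂ + 1), Nat.choose m i ∧
    Module.finrank (ZMod 2) ↥(Cfst r₁ m ⊓ Csnd r₂ m)
      = (∑ i ∈ Finset.range (r₁ + 1), Nat.choose m i)
        * ∑ i ∈ Finset.range (r₂ + 1), Nat.choose m i := by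
  have hs₁ := isLowerSet_degFst_le m r₁
  have hs₂ := isLowerSet_degSnd_le m r₂
  have hC₁ : Cfst r₁ m = polyFunProd {d | degFst d ≤ r₁} := by ext; exact mem_polyFunProd.symm
  have hC₂ : Csnd r₂ m = polyFunProd {d | degSnd d ≤ r₂} := by ext; exact mem_polyFunProd.symm
  have hC : Cfst r₁ m ⊓ Csnd r₂ m = polyFunProd ({d | degFst d ≤ r₁} ∩ {d | degSnd d ≤ r₂}) := by
    rw [hC₁, hC₂, polyFunProd_inf hs₁ hs₂]
  have count := natCard_subtype_toLeft_toRight (α := Fin m) (β := Fin m)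
  have hd₁ : Module.finrank (ZMod 2) (Cfst r₁ m) = (∑ i ∈ range (r₁ + 1), m.choose i) * 2 ^ m := by
    rw [hC₁, finrank_polyFunProd hs₁]
    simpa [degFst_squarefreeExponent, Fintype.card_subtype_finset_card_le,
      Nat.card_eq_fintype_card] using count (#· ≤ r₁) fun _ => True
  have hd₂ : Module.finrank (ZMod 2) (Csnd r₂ m) = 2 ^ m * ∑ i ∈ range (r₂ + 1), m.choose i := by
    rw [hC₂, finrank_polyFunProd hs₂]
    simpa [degSnd_squarefreeExponent, Fintype.card_subtype_finset_card_le,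
      Nat.card_eq_fintype_card] using count (fun _ => True) (#· ≤ r₂)
  have hd : Module.finrank (ZMod 2) ↥(Cfst r₁ m ⊓ Csnd r₂ m)
      = (∑ i ∈ range (r₁ + 1), m.choose i) * ∑ i ∈ range (r₂ + 1), m.choose i := by
    rw [hC, finrank_polyFunProd (hs₁.inter hs₂)]
    simpa [degFst_squarefreeExponent, degSnd_squarefreeExponent,
      Fintype.card_subtype_finset_card_le, Nat.card_eq_fintype_card] using
      count (#· ≤ r₁) (#· ≤ r₂)
  exact ⟨fun f => by rw [hC, mem_polyFunProd]; rfl, by rw [hd, hd₁, hd₂]; ring, hd₁, hd₂, hd⟩
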